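/- Fix ε > 0 and C > 0, and fix constants C₂, C₃ > 0. For each K with C·σ_K < 1/2, let S^{(K)} be the random walk with step-up probability p_K = 1/2 − C·σ_K started at 0. Then lim_{K→∞} e^{K^α} · P_0[ τ_{⌈C₃·ε·σ_K·K⌉} < τ_{−⌈C₂·ε·σ_K·K⌉} ] = 0. -/

import Mathlib

open MeasureTheory ProbabilityTheory Filter Set

/-- The simple random walk started at `j` with increments `ξ`. -/
noncomputable def walk {Ω : Type*} (j : ℤ) (ξ : ℕ → Ω → ℤ) (n : ℕ) (ω : Ω) : ℤ :=
  j + ∑ i ∈ Finset.range n, ξ i ω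

/-- The hitting time `τ_m = inf {n ≥ 0 : S_n = m}` (with `inf ∅ = ∞`) of the level `m`
by the walk started at `j` with increments `ξ`. -/
noncomputable def hitTime {Ω : Type*} (j : ℤ) (ξ : ℕ → Ω → ℤ) (m : ℤ) (ω : Ω) : ℕ∞ :=
  ⨅ (n : ℕ) (_ : walk j ξ n ω = m), (n : ℕ∞)

/-! The event `τ_b < τ_{-a}` forces the walk to visit `b` at some time `n`, so a union bound over
`n` of the Chernoff bounds `P[S_n ≥ b] ≤ e^{-θb} m(θ)^n` gives `P ≤ e^{-θb} / (1 - m(θ))`, where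
`m(θ) = p e^θ + (1 - p) e^{-θ}`. For `p = 1/2 - θ` one has `m(θ) ≤ 1 - θ²`. With `θ = Cσ_K` and
`b = ⌈C₃εσ_K K⌉` the exponent `θb` is at least `C C₃ ε σ_K² K = C C₃ ε (K^{1/2-α}σ_K)² K^{2α}`,
which eventually exceeds `K^{2α}`, while `1/θ² ≤ K/C²`; and `K e^{K^α - K^{2α}} → 0`. -/

open Real

section PlusMinusOneStep

variable {Ω : Type*} [MeasurableSpace Ω] {P : Measure Ω} [IsProbabilityMeasure P]
  {X : Ω → ℤ} {p : ℝ}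

lemma ae_eq_one_or_eq_neg_one (hX : Measurable X) (hp0 : 0 ≤ p) (hp1 : p ≤ 1)
    (h1 : P {ω | X ω = 1} = ENNReal.ofReal p) (h2 : P {ω | X ω = -1} = ENNReal.ofReal (1 - p)) :
    ∀ᵐ ω ∂P, X ω = 1 ∨ X ω = -1 := by
  have hdisj : Disjoint {ω | X ω = 1} {ω | X ω = -1} :=
    disjoint_left.2 fun ω h h' => by simp_all
  rw [ae_iff_measure_eq (by measurability), ofPred_or,
    measure_union hdisj (hX (measurableSet_singleton _)), h1, h2,
    ← ENNReal.ofReal_add hp0 (by linarith), measure_univ]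
  simp

lemma exp_mul_ae_eq_indicator (hX : Measurable X) (hp0 : 0 ≤ p) (hp1 : p ≤ 1)
    (h1 : P {ω | X ω = 1} = ENNReal.ofReal p) (h2 : P {ω | X ω = -1} = ENNReal.ofReal (1 - p))
    (θ : ℝ) :
    (fun ω => exp (θ * X ω)) =ᵐ[P] fun ω => {ω | X ω = 1}.indicator (fun _ => exp θ) ω +
      {ω | X ω = -1}.indicator (fun _ => exp (-θ)) ω := by
  filter_upwards [ae_eq_one_or_eq_neg_one hX hp0 hp1 h1 h2] with ω h
  rcases h with h | h <;> simp [h]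

lemma integrable_exp_mul_of_pm_one (hX : Measurable X) (hp0 : 0 ≤ p) (hp1 : p ≤ 1)
    (h1 : P {ω | X ω = 1} = ENNReal.ofReal p) (h2 : P {ω | X ω = -1} = ENNReal.ofReal (1 - p))
    (θ : ℝ) : Integrable (fun ω => exp (θ * X ω)) P :=
  (((integrable_const _).indicator (hX (measurableSet_singleton _))).add
    ((integrable_const _).indicator (hX (measurableSet_singleton _)))).congr
    (exp_mul_ae_eq_indicator hX hp0 hp1 h1 h2 θ).symm

lemma mgf_of_pm_one (hX : Measurable X) (hp0 : 0 ≤ p) (hp1 : p ≤ 1)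
    (h1 : P {ω | X ω = 1} = ENNReal.ofReal p) (h2 : P {ω | X ω = -1} = ENNReal.ofReal (1 - p))
    (θ : ℝ) : mgf (fun ω => (X ω : ℝ)) P θ = p * exp θ + (1 - p) * exp (-θ) := by
  have hA : MeasurableSet {ω | X ω = 1} := hX (measurableSet_singleton 1)
  have hB : MeasurableSet {ω | X ω = -1} := hX (measurableSet_singleton (-1))
  rw [mgf, integral_congr_ae (exp_mul_ae_eq_indicator hX hp0 hp1 h1 h2 θ),
    integral_add ((integrable_const _).indicator hA) ((integrable_const _).indicator hB),
    integral_indicator_const _ hA, integral_indicator_const _ hB, measureReal_def,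
    measureReal_def, h1, h2, ENNReal.toReal_ofReal hp0, ENNReal.toReal_ofReal (by linarith)]
  simp only [smul_eq_mul]

end PlusMinusOneStep

section BiasedWalk

variable {Ω : Type*} [MeasurableSpace Ω] {P : Measure Ω} [IsProbabilityMeasure P]
  {ξ : ℕ → Ω → ℤ} {p θ : ℝ}

lemma measureReal_walk_eq_le (hmeas : ∀ n, Measurable (ξ n)) (hind : iIndepFun ξ P)
    (hp0 : 0 ≤ p) (hp1 : p ≤ 1)
    (h1 : ∀ n, P {ω | ξ n ω = 1} = ENNReal.ofReal p)
    (h2 : ∀ n, P {ω | ξ n ω = -1} = ENNReal.ofReal (1 - p)) (hθ : 0 ≤ θ) (b : ℤ) (n : ℕ) :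
    P.real {ω | walk 0 ξ n ω = b}
      ≤ exp (-θ * b) * (p * exp θ + (1 - p) * exp (-θ)) ^ n := by
  set Y : ℕ → Ω → ℝ := fun i ω => (ξ i ω : ℝ)
  have hYmeas : ∀ i, Measurable (Y i) := fun i => measurable_from_top.comp (hmeas i)
  have hYind : iIndepFun Y P := hind.comp _ fun _ => measurable_from_top
  have hsub : {ω | walk 0 ξ n ω = b} ⊆ {ω | (b : ℝ) ≤ (∑ i ∈ Finset.range n, Y i) ω} := by
    intro ω hω
    simp only [mem_ofPred_eq, walk, zero_add] at hω
    simp [Y, ← hω]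
  calc P.real {ω | walk 0 ξ n ω = b}
      ≤ P.real {ω | (b : ℝ) ≤ (∑ i ∈ Finset.range n, Y i) ω} := measureReal_mono hsub
    _ ≤ exp (-θ * b) * mgf (∑ i ∈ Finset.range n, Y i) P θ :=
      measure_ge_le_exp_mul_mgf _ hθ (hYind.integrable_exp_mul_sum hYmeas fun i _ =>
        integrable_exp_mul_of_pm_one (hmeas i) hp0 hp1 (h1 i) (h2 i) θ)
    _ = exp (-θ * b) * (p * exp θ + (1 - p) * exp (-θ)) ^ n := by
      rw [hYind.mgf_sum hYmeas, Finset.prod_congr rfl fun i _ =>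
        mgf_of_pm_one (hmeas i) hp0 hp1 (h1 i) (h2 i) θ, Finset.prod_const, Finset.card_range]

lemma measureReal_exists_walk_eq_le (hmeas : ∀ n, Measurable (ξ n)) (hind : iIndepFun ξ P)
    (hp0 : 0 ≤ p) (hp1 : p ≤ 1)
    (h1 : ∀ n, P {ω | ξ n ω = 1} = ENNReal.ofReal p)
    (h2 : ∀ n, P {ω | ξ n ω = -1} = ENNReal.ofReal (1 - p)) (hθ : 0 ≤ θ)
    (hm : p * exp θ + (1 - p) * exp (-θ) < 1) (b : ℤ) :
    P.real {ω | ∃ n, walk 0 ξ n ω = b}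
      ≤ exp (-θ * b) / (1 - (p * exp θ + (1 - p) * exp (-θ))) := by
  set m := p * exp θ + (1 - p) * exp (-θ)
  have hm0 : 0 ≤ m := by positivity
  have hsum : HasSum (fun n : ℕ => exp (-θ * b) * m ^ n) (exp (-θ * b) / (1 - m)) := by
    simpa only [div_eq_mul_inv] using (hasSum_geometric_of_lt_one hm0 hm).mul_left _
  refine ENNReal.toReal_le_of_le_ofReal (by positivity) ?_
  calc P {ω | ∃ n, walk 0 ξ n ω = b}
      ≤ ∑' n, P {ω | walk 0 ξ n ω = b} := by
        simpa only [ofPred_exists] using measure_iUnion_le _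
    _ ≤ ∑' n, ENNReal.ofReal (exp (-θ * b) * m ^ n) := ENNReal.tsum_le_tsum fun n =>
        ENNReal.le_ofReal_iff_toReal_le (by finiteness) (by positivity) |>.2 <|
          measureReal_walk_eq_le hmeas hind hp0 hp1 h1 h2 hθ b n
    _ = ENNReal.ofReal (exp (-θ * b) / (1 - m)) :=
        (ENNReal.ofReal_tsum_of_nonneg (fun n => by positivity) hsum.summable).symm.trans
          (by rw [hsum.tsum_eq])

end BiasedWalk

lemma exp_le_one_add_add_sq {x : ℝ} (hx : |x| ≤ 1) : exp x ≤ 1 + x + x ^ 2 := by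
  linarith [(abs_le.1 (abs_exp_sub_one_sub_id_le hx)).2]

lemma biased_step_mgf_le {θ : ℝ} (hθ0 : 0 ≤ θ) (hθ : θ ≤ 1 / 2) :
    (1 / 2 - θ) * exp θ + (1 - (1 / 2 - θ)) * exp (-θ) ≤ 1 - θ ^ 2 := by
  have hθ1 : |θ| ≤ 1 := by rw [abs_of_nonneg hθ0]; linarith
  have hexp := exp_le_one_add_add_sq hθ1
  have hexp_neg := exp_le_one_add_add_sq (x := -θ) (by rwa [abs_neg])
  calc (1 / 2 - θ) * exp θ + (1 - (1 / 2 - θ)) * exp (-θ)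
      ≤ (1 / 2 - θ) * (1 + θ + θ ^ 2) + (1 - (1 / 2 - θ)) * (1 + -θ + (-θ) ^ 2) := by
        gcongr; linarith
    _ = 1 - θ ^ 2 := by ring

lemma hitTime_lt_subset {Ω : Type*} (j : ℤ) (ξ : ℕ → Ω → ℤ) (a b : ℤ) :
    {ω | hitTime j ξ b ω < hitTime j ξ a ω} ⊆ {ω | ∃ n, walk j ξ n ω = b} := by
  intro ω hω
  by_contra h
  simp only [mem_ofPred_eq, not_exists] at h hω
  simp [hitTime, h] at hω

lemma measureReal_hitTime_lt_le_of_bias {Ω : Type*} [MeasurableSpace Ω] {P : Measure Ω}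
    [IsProbabilityMeasure P] {ξ : ℕ → Ω → ℤ} {θ : ℝ} (hmeas : ∀ n, Measurable (ξ n))
    (hind : iIndepFun ξ P) (hθ0 : 0 < θ) (hθ : θ ≤ 1 / 2)
    (h1 : ∀ n, P {ω | ξ n ω = 1} = ENNReal.ofReal (1 / 2 - θ))
    (h2 : ∀ n, P {ω | ξ n ω = -1} = ENNReal.ofReal (1 - (1 / 2 - θ))) (a b : ℤ) :
    P.real {ω | hitTime 0 ξ b ω < hitTime 0 ξ a ω} ≤ exp (-θ * b) / θ ^ 2 := by
  have hm := biased_step_mgf_le hθ0.le hθ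
  refine (measureReal_mono (hitTime_lt_subset 0 ξ a b)).trans <|
    (measureReal_exists_walk_eq_le hmeas hind (by linarith) (by linarith) h1 h2 hθ0.le
    (by nlinarith) b).trans ?_
  gcongr
  linarith

lemma tendsto_exp_rpow_mul_mul_exp_neg_rpow {α : ℝ} (hα : 0 < α) :
    Tendsto (fun x : ℝ => exp (x ^ α) * (x * exp (-x ^ (2 * α)))) atTop (nhds 0) := by
  have hlog : Tendsto (fun x : ℝ => x ^ (2 * α) * (log x / x ^ (2 * α) + x ^ (-α) - 1))
      atTop atBot := by
    refine (tendsto_rpow_atTop (by linarith)).atTop_mul_neg (show (-1 : ℝ) < 0 by norm_num) ?_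
    simpa using (((isLittleO_log_rpow_atTop (by linarith)).tendsto_div_nhds_zero).add
      (tendsto_rpow_neg_atTop hα)).sub_const 1
  refine (tendsto_exp_atBot.comp hlog).congr' ?_
  filter_upwards [eventually_gt_atTop 0] with x hx
  have hx2α : x ^ (2 * α) ≠ 0 := (rpow_pos_of_pos hx _).ne'
  have hxα : x ^ (2 * α) * x ^ (-α) = x ^ α := by rw [← rpow_add hx]; ring_nf
  rw [Function.comp_apply, mul_sub, mul_add, mul_div_cancel₀ _ hx2α, hxα, mul_one, sub_eq_add_neg,
    exp_add, exp_add, exp_log hx]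
  ring

lemma eventually_rpow_le_mul_sq_mul {α c : ℝ} {σ : ℕ → ℝ} (hc : 0 < c)
    (hσ : Tendsto (fun K : ℕ => (K : ℝ) ^ ((1 : ℝ) / 2 - α) * σ K) atTop atTop) :
    ∀ᶠ K : ℕ in atTop, (K : ℝ) ^ (2 * α) ≤ c * (σ K ^ 2 * K) := by
  filter_upwards [((hσ.atTop_mul_atTop₀ hσ).const_mul_atTop hc).eventually_ge_atTop 1]
    with K hK
  have hexp : ((1 : ℝ) / 2 - α) * (2 : ℕ) + 2 * α = 1 := by push_cast; ring
  have hsplit : ((K : ℝ) ^ ((1 : ℝ) / 2 - α)) ^ 2 * (K : ℝ) ^ (2 * α) = K := by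
    rw [← rpow_natCast, ← rpow_mul K.cast_nonneg,
      ← rpow_add' K.cast_nonneg (by rw [hexp]; exact one_ne_zero), hexp, rpow_one]
  calc (K : ℝ) ^ (2 * α) ≤ c * ((K : ℝ) ^ ((1 : ℝ) / 2 - α) * σ K) ^ 2 * (K : ℝ) ^ (2 * α) :=
        le_mul_of_one_le_left (by positivity) (by nlinarith)
    _ = c * (σ K ^ 2 * K) := by nth_rw 3 [← hsplit]; ring

lemma exp_neg_mul_div_sq_le {x y θ b C : ℝ} (hx : 0 < x) (hC : 0 < C) (hy : y ≤ θ * b)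
    (hθ : C ^ 2 ≤ θ ^ 2 * x) : exp (-θ * b) / θ ^ 2 ≤ x * exp (-y) / C ^ 2 := by
  have hθ2 : 0 < θ ^ 2 := pos_of_mul_pos_left ((by positivity : 0 < C ^ 2).trans_le hθ) hx.le
  rw [div_le_div_iff₀ hθ2 (by positivity)]
  calc exp (-θ * b) * C ^ 2 ≤ exp (-y) * (θ ^ 2 * x) :=
        mul_le_mul (exp_le_exp.2 (by linarith)) hθ (by positivity) (by positivity)
    _ = x * exp (-y) * θ ^ 2 := by ring

theorem stmt8_general (α : ℝ) (hα : α ∈ Set.Ioo (0 : ℝ) (1 / 2))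
    (σ : ℕ → ℝ) (hσpos : ∀ K, 0 < σ K)
    (hσ0 : Tendsto σ atTop (nhds 0))
    (hσK : Tendsto (fun K : ℕ => (K : ℝ) ^ ((1 : ℝ) / 2 - α) * σ K) atTop atTop)
    (ε C C₂ C₃ : ℝ) (hε : 0 < ε) (hC : 0 < C) (hC₃ : 0 < C₃)
    (Ω : ℕ → Type*) (mΩ : ∀ K, MeasurableSpace (Ω K))
    (P : ∀ K, Measure (Ω K)) (hP : ∀ K, IsProbabilityMeasure (P K))
    (ξ : ∀ K, ℕ → Ω K → ℤ) (hmeas : ∀ K n, Measurable (ξ K n))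
    (hindep : ∀ K, C * σ K < 1 / 2 → iIndepFun (ξ K) (P K))
    (hup : ∀ K, C * σ K < 1 / 2 → ∀ n,
      P K {ω | ξ K n ω = 1} = ENNReal.ofReal (1 / 2 - C * σ K))
    (hdown : ∀ K, C * σ K < 1 / 2 → ∀ n,
      P K {ω | ξ K n ω = -1} = ENNReal.ofReal (1 - (1 / 2 - C * σ K))) :
    Tendsto (fun K : ℕ =>
      Real.exp ((K : ℝ) ^ α) *
        (P K {ω | hitTime 0 (ξ K) ((⌈C₃ * ε * σ K * (K : ℝ)⌉₊ : ℕ) : ℤ) ω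
            < hitTime 0 (ξ K) (-((⌈C₂ * ε * σ K * (K : ℝ)⌉₊ : ℕ) : ℤ)) ω}).toReal)
      atTop (nhds 0) := by
  have hlim : Tendsto (fun K : ℕ => exp ((K : ℝ) ^ α) * (K * exp (-(K : ℝ) ^ (2 * α))) / C ^ 2)
      atTop (nhds 0) := by
    simpa only [Function.comp_apply, zero_div] using
      ((tendsto_exp_rpow_mul_mul_exp_neg_rpow hα.1).comp tendsto_natCast_atTop_atTop).div_const
        (C ^ 2)
  refine squeeze_zero' (Eventually.of_forall fun K => by positivity) ?_ hlim
  filter_upwards [hσ0.eventually (gt_mem_nhds (show 0 < 1 / (2 * C) by positivity)),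
    eventually_rpow_le_mul_sq_mul (by positivity : 0 < C * C₃ * ε) hσK,
    eventually_rpow_le_mul_sq_mul one_pos hσK, eventually_ge_atTop 1] with K hσ hθb hσsq hK
  have hσ_pos := hσpos K
  have hθ : C * σ K < 1 / 2 := by
    rw [lt_div_iff₀ (by positivity)] at hσ; linarith
  have hKα : 1 ≤ (K : ℝ) ^ (2 * α) := one_le_rpow (by exact_mod_cast hK) (by linarith [hα.1])
  set b : ℕ := ⌈C₃ * ε * σ K * (K : ℝ)⌉₊
  have hb : (K : ℝ) ^ (2 * α) ≤ C * σ K * b := calc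
    _ ≤ C * C₃ * ε * (σ K ^ 2 * K) := hθb
    _ = C * σ K * (C₃ * ε * σ K * K) := by ring
    _ ≤ C * σ K * b := by gcongr; exact Nat.le_ceil _
  have hθsq : C ^ 2 ≤ (C * σ K) ^ 2 * K := by nlinarith
  have := hP K
  have hprob := measureReal_hitTime_lt_le_of_bias (hmeas K) (hindep K hθ) (by positivity) hθ.le
    (hup K hθ) (hdown K hθ) (-((⌈C₂ * ε * σ K * (K : ℝ)⌉₊ : ℕ) : ℤ)) b
  refine (mul_le_mul_of_nonneg_left (hprob.trans (exp_neg_mul_div_sq_le (by positivity) hC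
    (by exact_mod_cast hb) hθsq)) (exp_pos _).le).trans_eq (mul_div_assoc _ _ _).symm

/-- Fix `α ∈ (0,1/2)` and a sequence `σ_K > 0` with `σ_K → 0` and `K^{1/2−α}·σ_K → ∞`.
Fix `ε > 0`, `C > 0`, and constants `C₂, C₃ > 0`.  For each `K` with `C·σ_K < 1/2`,
let `S^{(K)}` be the random walk with i.i.d. `±1` steps with step-up probability
`p_K = 1/2 − C·σ_K` started at `0`.  Then
`lim_{K→∞} e^{K^α} · P_0[ τ_{⌈C₃·ε·σ_K·K⌉} < τ_{−⌈C₂·ε·σ_K·K⌉} ] = 0`. -/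
theorem stmt8 (α : ℝ) (hα : α ∈ Set.Ioo (0 : ℝ) (1 / 2))
    (σ : ℕ → ℝ) (hσpos : ∀ K, 0 < σ K)
    (hσ0 : Tendsto σ atTop (nhds 0))
    (hσK : Tendsto (fun K : ℕ => (K : ℝ) ^ ((1 : ℝ) / 2 - α) * σ K) atTop atTop)
    (ε C C₂ C₃ : ℝ) (hε : 0 < ε) (hC : 0 < C) (hC₂ : 0 < C₂) (hC₃ : 0 < C₃)
    (Ω : ℕ → Type*) (mΩ : ∀ K, MeasurableSpace (Ω K))
    (P : ∀ K, Measure (Ω K)) (hP : ∀ K, IsProbabilityMeasure (P K))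
    (ξ : ∀ K, ℕ → Ω K → ℤ) (hmeas : ∀ K n, Measurable (ξ K n))
    (hindep : ∀ K, C * σ K < 1 / 2 → iIndepFun (ξ K) (P K))
    (hup : ∀ K, C * σ K < 1 / 2 → ∀ n,
      P K {ω | ξ K n ω = 1} = ENNReal.ofReal (1 / 2 - C * σ K))
    (hdown : ∀ K, C * σ K < 1 / 2 → ∀ n,
      P K {ω | ξ K n ω = -1} = ENNReal.ofReal (1 - (1 / 2 - C * σ K))) :
    Tendsto (fun K : ℕ =>
      Real.exp ((K : ℝ) ^ α) *
        (P K {ω | hitTime 0 (ξ K) ((⌈C₃ * ε * σ K * (K : ℝ)⌉₊ : ℕ) : ℤ) ω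
            < hitTime 0 (ξ K) (-((⌈C₂ * ε * σ K * (K : ℝ)⌉₊ : ℕ) : ℤ)) ω}).toReal)
      atTop (nhds 0) :=
  stmt8_general α hα σ hσpos hσ0 hσK ε C C₂ C₃ hε hC hC₃ Ω mΩ P hP ξ hmeas hindep hup hdown
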